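/- In the threshold regression setting, if additionally E[f_{t-1}^2 1{z_t ≤ s_0 ∧ s < z_t ≤ s_0 ∨ s}] > 0 whenever s ≠ s_0 and E[f_{t-1}^2 1{z_t ≤ s}] > 0, E[f_{t-1}^2 1{z_t > s}] > 0 for all s in the parameter set, and φ_0^{(1)} ≠ φ_0^{(2)}, then E[ε_t(φ, s)^2] = E[ε_t(φ_0, s_0)^2] implies (φ, s) = (φ_0, s_0). -/

import Mathlib

open MeasureTheory ProbabilityTheory

/-!
Write the candidate residual as `ε_t(φ, s) = ξ_t + D_t`, where `D_t` is the gap between the true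
and the candidate regression functions. `D_t` is a function of `(f_{t-1}, z_t)`, hence independent
of the centred `ξ_t`, so `E ε_t(φ, s)² = E ξ_t² + E D_t²` and equal mean squared errors force
`D_t = 0` almost surely. On `{z ≤ min s s₀}`, on `{z > max s s₀}` and on the band between `s` and
`s₀`, `D_t` is a constant multiple of `f_{t-1}`, and the positivity hypotheses make each constant
vanish: `φ⁽¹⁾ = φ₀⁽¹⁾`, `φ⁽²⁾ = φ₀⁽²⁾`, and a nonempty band would force `φ₀⁽¹⁾ = φ₀⁽²⁾`.
-/

noncomputable def thresholdFit (φ1 φ2 s x y : ℝ) : ℝ := if y ≤ s then φ1 * x else φ2 * x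

section thresholdFit

variable {φ1 φ2 s x y : ℝ}

lemma thresholdFit_of_le (h : y ≤ s) : thresholdFit φ1 φ2 s x y = φ1 * x := if_pos h

lemma thresholdFit_of_lt (h : s < y) : thresholdFit φ1 φ2 s x y = φ2 * x := if_neg h.not_ge

lemma abs_thresholdFit_le : |thresholdFit φ1 φ2 s x y| ≤ max |φ1| |φ2| * |x| := by
  unfold thresholdFit
  split_ifs <;> rw [abs_mul] <;> gcongr
  exacts [le_max_left _ _, le_max_right _ _]

lemma measurable_thresholdFit : Measurable fun p : ℝ × ℝ => thresholdFit φ1 φ2 s p.1 p.2 :=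
  Measurable.ite (measurableSet_le measurable_snd measurable_const)
    (measurable_fst.const_mul _) (measurable_fst.const_mul _)

end thresholdFit

section

variable {Ω : Type*} [MeasurableSpace Ω] {μ : Measure Ω}

lemma memLp_thresholdFit {φ1 φ2 s : ℝ} {f z : Ω → ℝ} {p : ENNReal} (hf : MemLp f p μ)
    (hz : AEMeasurable z μ) : MemLp (fun ω => thresholdFit φ1 φ2 s (f ω) (z ω)) p μ :=
  (hf.const_mul (max |φ1| |φ2|)).of_le
    (measurable_thresholdFit.comp_aemeasurable (hf.aestronglyMeasurable.aemeasurable.prodMk hz)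
      |>.aestronglyMeasurable)
    (.of_forall fun ω => by
      rw [Real.norm_eq_abs, Real.norm_eq_abs, abs_mul,
        abs_of_nonneg (le_max_of_le_left (abs_nonneg _))]
      exact abs_thresholdFit_le)

lemma integral_add_sq_of_indepFun {X Y : Ω → ℝ} (hXY : IndepFun X Y μ) (hX : MemLp X 2 μ)
    (hY : MemLp Y 2 μ) (hX0 : ∫ ω, X ω ∂μ = 0) :
    ∫ ω, (X ω + Y ω) ^ 2 ∂μ = ∫ ω, X ω ^ 2 ∂μ + ∫ ω, Y ω ^ 2 ∂μ := by
  have hcross_int : Integrable (fun ω => 2 * (X ω * Y ω)) μ :=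
    (hX.integrable_mul hY).const_mul 2
  have hcross : ∫ ω, X ω * Y ω ∂μ = 0 := by
    simpa [hX0] using
      hXY.integral_mul_eq_mul_integral hX.aestronglyMeasurable hY.aestronglyMeasurable
  have hsum_int : Integrable (fun ω => X ω ^ 2 + 2 * (X ω * Y ω)) μ :=
    hX.integrable_sq.add hcross_int
  calc ∫ ω, (X ω + Y ω) ^ 2 ∂μ = ∫ ω, X ω ^ 2 + 2 * (X ω * Y ω) + Y ω ^ 2 ∂μ := by
        congr 1; ext ω; ring
    _ = ∫ ω, X ω ^ 2 ∂μ + ∫ ω, Y ω ^ 2 ∂μ := by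
        rw [integral_add hsum_int hY.integrable_sq, integral_add hX.integrable_sq hcross_int,
          integral_const_mul, hcross, mul_zero, add_zero]

lemma ae_eq_zero_of_integral_add_sq_eq {X Y : Ω → ℝ} (hXY : IndepFun X Y μ)
    (hX : MemLp X 2 μ) (hY : MemLp Y 2 μ) (hX0 : ∫ ω, X ω ∂μ = 0)
    (h : ∫ ω, (X ω + Y ω) ^ 2 ∂μ = ∫ ω, X ω ^ 2 ∂μ) :
    Y =ᵐ[μ] 0 := by
  have hY0 : ∫ ω, Y ω ^ 2 ∂μ = 0 := by
    linarith [integral_add_sq_of_indepFun hXY hX hY hX0]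
  filter_upwards [(integral_eq_zero_iff_of_nonneg (fun ω => sq_nonneg (Y ω))
    hY.integrable_sq).mp hY0] with ω hω
  exact pow_eq_zero_iff two_ne_zero |>.mp hω

lemma eq_of_ae_mul_eq_of_integral_pos {f : Ω → ℝ} {P : Ω → Prop} [DecidablePred P] {c c' : ℝ}
    (h : ∀ᵐ ω ∂μ, P ω → c * f ω = c' * f ω)
    (hpos : 0 < ∫ ω, (if P ω then f ω ^ 2 else 0) ∂μ) : c = c' := by
  by_contra hne
  refine hpos.ne' (integral_eq_zero_of_ae ?_)
  filter_upwards [h] with ω hω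
  split_ifs with hP
  · have hf : f ω = 0 := (mul_eq_zero.mp (by linear_combination hω hP)).resolve_left
      (sub_ne_zero.mpr hne)
    simp [hf]
  · rfl

lemma eq_of_ae_thresholdFit_eq {f z : Ω → ℝ} {φ1 φ2 s φ01 φ02 s0 : ℝ} (hφ0 : φ01 ≠ φ02)
    (hband : ∀ t : ℝ, t ≠ s0 →
      0 < ∫ ω, (if min s0 t < z ω ∧ z ω ≤ max s0 t then f ω ^ 2 else 0) ∂μ)
    (hlow : ∀ t : ℝ, 0 < ∫ ω, (if z ω ≤ t then f ω ^ 2 else 0) ∂μ)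
    (hup : ∀ t : ℝ, 0 < ∫ ω, (if t < z ω then f ω ^ 2 else 0) ∂μ)
    (h : ∀ᵐ ω ∂μ, thresholdFit φ1 φ2 s (f ω) (z ω) = thresholdFit φ01 φ02 s0 (f ω) (z ω)) :
    φ1 = φ01 ∧ φ2 = φ02 ∧ s = s0 := by
  have h1 : φ1 = φ01 := by
    refine eq_of_ae_mul_eq_of_integral_pos (P := fun ω => z ω ≤ min s s0) ?_ (hlow _)
    filter_upwards [h] with ω hω hz
    rwa [thresholdFit_of_le (hz.trans (min_le_left _ _)),
      thresholdFit_of_le (hz.trans (min_le_right _ _))] at hω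
  have h2 : φ2 = φ02 := by
    refine eq_of_ae_mul_eq_of_integral_pos (P := fun ω => max s s0 < z ω) ?_ (hup _)
    filter_upwards [h] with ω hω hz
    rwa [thresholdFit_of_lt ((le_max_left _ _).trans_lt hz),
      thresholdFit_of_lt ((le_max_right _ _).trans_lt hz)] at hω
  refine ⟨h1, h2, ?_⟩
  by_contra hs
  apply hφ0
  rcases lt_or_gt_of_ne hs with hlt | hgt
  · refine (eq_of_ae_mul_eq_of_integral_pos (f := f) ?_ (hband s hs)).symm
    filter_upwards [h] with ω hω ⟨hz, hz0⟩
    rw [min_eq_right hlt.le] at hz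
    rw [max_eq_left hlt.le] at hz0
    rwa [thresholdFit_of_lt hz, thresholdFit_of_le hz0, h2] at hω
  · refine eq_of_ae_mul_eq_of_integral_pos (f := f) ?_ (hband s hs)
    filter_upwards [h] with ω hω ⟨hz0, hz⟩
    rw [min_eq_left hgt.le] at hz0
    rw [max_eq_right hgt.le] at hz
    rwa [thresholdFit_of_le hz, thresholdFit_of_lt hz0, h1] at hω

end

theorem threshold_regression_identification_unique_general {Ω : Type*} [MeasurableSpace Ω]
    (μ : Measure Ω)
    (fprev z ξ : Ω → ℝ)
    (hzmeas : Measurable z)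
    (hfL2 : MemLp fprev 2 μ) (hξL2 : MemLp ξ 2 μ)
    (hindep : ProbabilityTheory.IndepFun ξ (fun ω => (fprev ω, z ω)) μ)
    (hmean : ∫ ω, ξ ω ∂μ = 0)
    (φ01 φ02 s0 : ℝ) (hφ0 : φ01 ≠ φ02)
    (ft : Ω → ℝ)
    (hft : ∀ ω, ft ω =
      (if z ω ≤ s0 then φ01 * fprev ω else φ02 * fprev ω) + ξ ω)
    (hband : ∀ s : ℝ, s ≠ s0 →
      0 < ∫ ω, (if min s0 s < z ω ∧ z ω ≤ max s0 s then (fprev ω) ^ 2 else 0) ∂μ)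
    (hlow : ∀ s : ℝ, 0 < ∫ ω, (if z ω ≤ s then (fprev ω) ^ 2 else 0) ∂μ)
    (hup : ∀ s : ℝ, 0 < ∫ ω, (if s < z ω then (fprev ω) ^ 2 else 0) ∂μ) :
    ∀ φ1 φ2 s : ℝ,
      (∫ ω, (ft ω - (if z ω ≤ s then φ1 * fprev ω else φ2 * fprev ω)) ^ 2 ∂μ =
        ∫ ω, (ft ω - (if z ω ≤ s0 then φ01 * fprev ω else φ02 * fprev ω)) ^ 2 ∂μ) →
      φ1 = φ01 ∧ φ2 = φ02 ∧ s = s0 := by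
  intro φ1 φ2 s heq
  set fit : ℝ → ℝ → ℝ → Ω → ℝ := fun a b t ω => thresholdFit a b t (fprev ω) (z ω)
  have hresid : ∀ a b t ω, ft ω - fit a b t ω = ξ ω + (fit φ01 φ02 s0 ω - fit a b t ω) := by
    intro a b t ω
    rw [show ft ω = fit φ01 φ02 s0 ω + ξ ω from hft ω]
    ring
  change ∫ ω, (ft ω - fit φ1 φ2 s ω) ^ 2 ∂μ = ∫ ω, (ft ω - fit φ01 φ02 s0 ω) ^ 2 ∂μ at heq
  simp only [hresid, sub_self, add_zero] at heq
  have hgap : (fun ω => fit φ01 φ02 s0 ω - fit φ1 φ2 s ω) =ᵐ[μ] 0 :=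
    ae_eq_zero_of_integral_add_sq_eq
      (hindep.comp measurable_id (measurable_thresholdFit.sub measurable_thresholdFit)) hξL2
      ((memLp_thresholdFit hfL2 hzmeas.aemeasurable).sub
        (memLp_thresholdFit hfL2 hzmeas.aemeasurable)) hmean heq
  refine eq_of_ae_thresholdFit_eq hφ0 hband hlow hup ?_
  filter_upwards [hgap] with ω hω
  exact (sub_eq_zero.mp hω).symm

/-- Uniqueness part of the identification lemma for two-regime threshold regression:
under positivity of `E[f_{t-1}² 1{threshold band}]` for `s ≠ s₀`, positivity of
`E[f_{t-1}² 1{z ≤ s}]` and `E[f_{t-1}² 1{z > s}]` for all `s`, and `φ₀⁽¹⁾ ≠ φ₀⁽²⁾`,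
equality `E[ε_t(φ,s)²] = E[ε_t(φ₀,s₀)²]` forces `(φ,s) = (φ₀,s₀)`. -/
theorem threshold_regression_identification_unique {Ω : Type*} [MeasurableSpace Ω]
    (μ : Measure Ω) [IsProbabilityMeasure μ]
    (fprev z ξ : Ω → ℝ)
    (hfmeas : Measurable fprev) (hzmeas : Measurable z) (hξmeas : Measurable ξ)
    (hfL2 : MemLp fprev 2 μ) (hξL2 : MemLp ξ 2 μ)
    (hindep : ProbabilityTheory.IndepFun ξ (fun ω => (fprev ω, z ω)) μ)
    (hmean : ∫ ω, ξ ω ∂μ = 0)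
    (ς : ℝ) (hς : 0 < ς) (hvar : ∫ ω, (ξ ω) ^ 2 ∂μ = ς ^ 2)
    (φ01 φ02 s0 : ℝ) (hφ0 : φ01 ≠ φ02)
    (ft : Ω → ℝ)
    (hft : ∀ ω, ft ω =
      (if z ω ≤ s0 then φ01 * fprev ω else φ02 * fprev ω) + ξ ω)
    (hband : ∀ s : ℝ, s ≠ s0 →
      0 < ∫ ω, (if min s0 s < z ω ∧ z ω ≤ max s0 s then (fprev ω) ^ 2 else 0) ∂μ)
    (hlow : ∀ s : ℝ, 0 < ∫ ω, (if z ω ≤ s then (fprev ω) ^ 2 else 0) ∂μ)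
    (hup : ∀ s : ℝ, 0 < ∫ ω, (if s < z ω then (fprev ω) ^ 2 else 0) ∂μ) :
    ∀ φ1 φ2 s : ℝ,
      (∫ ω, (ft ω - (if z ω ≤ s then φ1 * fprev ω else φ2 * fprev ω)) ^ 2 ∂μ =
        ∫ ω, (ft ω - (if z ω ≤ s0 then φ01 * fprev ω else φ02 * fprev ω)) ^ 2 ∂μ) →
      φ1 = φ01 ∧ φ2 = φ02 ∧ s = s0 :=
  threshold_regression_identification_unique_general μ fprev z ξ hzmeas hfL2 hξL2 hindep hmean φ01
    φ02 s0 hφ0 ft hft hband hlow hup
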